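/- arXiv:1103.3226 — 4 statements merged into one kernel-verified Lean document; each statement's English description precedes it below -/
import Mathlib

section
/- There exists a constant C > 0, depending only on U, H, ψ and γ (in particular independent of ε), such that for every ε ∈ (0,1) and every solution u^ε ∈ C²(U) ∩ C(Ū) of the penalized problem, one has max_{x ∈ Ū} γ^ε(u^ε(x) − ψ(x)) ≤ C and max_{x ∈ Ū} (u^ε(x) − ψ(x))/ε ≤ C. -/
open Set Filter Topology

lemma secondDerivTest {g : ℝ → ℝ}
    (hd : ∀ᶠ t in 𝓝 (0:ℝ), DifferentiableAt ℝ g t)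
    (hd2 : DifferentiableAt ℝ (deriv g) 0)
    (hmax : IsLocalMax g 0) : deriv (deriv g) 0 ≤ 0 := by
  by_contra h
  push_neg at h
  have h0 : deriv g 0 = 0 := hmax.deriv_eq_zero
  have hslope : Tendsto (slope (deriv g) 0) (𝓝[≠] 0) (𝓝 (deriv (deriv g) 0)) :=
    (hasDerivAt_iff_tendsto_slope.1 hd2.hasDerivAt)
  have hev : ∀ᶠ t in 𝓝[>] (0:ℝ), 0 < slope (deriv g) 0 t :=
    (hslope.mono_left (nhdsWithin_mono _ (fun t ht => ne_of_gt ht))).eventually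
      (eventually_gt_nhds h)
  have hev2 : ∀ᶠ t in 𝓝[>] (0:ℝ), 0 < deriv g t := by
    filter_upwards [hev, self_mem_nhdsWithin] with t ht ht'
    have : slope (deriv g) 0 t = deriv g t / t := by
      simp [slope_def_field, h0, div_eq_inv_mul]
    rw [this] at ht
    exact (div_pos_iff.1 ht).resolve_right (fun ⟨_, h2⟩ => absurd ht' (not_lt.2 h2.le)) |>.1
  have hev3 : ∀ᶠ t in 𝓝[>] (0:ℝ), DifferentiableAt ℝ g t ∧ g t ≤ g 0 ∧ 0 < deriv g t := by
    filter_upwards [hev2, nhdsWithin_le_nhds hd, nhdsWithin_le_nhds hmax] with t h1 h2 h3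
    exact ⟨h2, h3, h1⟩
  obtain ⟨b, hb, hIoc⟩ := mem_nhdsGT_iff_exists_Ioc_subset.1 hev3
  rw [mem_Ioi] at hb
  have hcont : ContinuousOn g (Icc 0 b) := by
    intro t ht
    rcases eq_or_lt_of_le ht.1 with rfl | htpos
    · exact hd.self_of_nhds.continuousAt.continuousWithinAt
    · exact ((hIoc ⟨htpos, ht.2⟩).1).continuousAt.continuousWithinAt
  have hmono : StrictMonoOn g (Icc 0 b) := by
    apply strictMonoOn_of_deriv_pos (convex_Icc 0 b) hcont
    intro t ht
    rw [interior_Icc] at ht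
    exact (hIoc ⟨ht.1, ht.2.le⟩).2.2
  have : g 0 < g b := hmono ⟨le_refl 0, hb.le⟩ ⟨hb.le, le_refl b⟩ hb
  exact absurd (hIoc ⟨hb, le_refl b⟩).2.1 (not_le.2 this)

lemma entry_nonpos {n : ℕ} {U : Set (EuclideanSpace ℝ (Fin n))} (hUo : IsOpen U)
    {f : EuclideanSpace ℝ (Fin n) → ℝ} (hf : ContDiffOn ℝ 2 f U)
    {x₀ : EuclideanSpace ℝ (Fin n)} (hx₀ : x₀ ∈ U) (hmax : IsLocalMax f x₀)
    (v : EuclideanSpace ℝ (Fin n)) :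
    fderiv ℝ (fun y => fderiv ℝ f y v) x₀ v ≤ 0 := by
  set ℓ : ℝ → EuclideanSpace ℝ (Fin n) := fun t => x₀ + t • v with hℓ
  have hℓ0 : ℓ 0 = x₀ := by simp [hℓ]
  have hℓd : ∀ t, HasDerivAt ℓ v t := fun t => by
    simpa [hℓ] using (((hasDerivAt_id t).smul_const v).const_add x₀)
  have hU' : ∀ᶠ t in 𝓝 (0:ℝ), ℓ t ∈ U := by
    have h1 : Tendsto ℓ (𝓝 0) (𝓝 x₀) := hℓ0 ▸ (hℓd 0).continuousAt
    exact h1 (hUo.mem_nhds hx₀)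
  have hfd : ∀ y ∈ U, DifferentiableAt ℝ f y := fun y hy =>
    (hf.differentiableOn (by norm_num)).differentiableAt (hUo.mem_nhds hy)
  set φ : EuclideanSpace ℝ (Fin n) → ℝ := fun y => fderiv ℝ f y v with hφ
  have hφd : DifferentiableAt ℝ φ x₀ := by
    have h1 : ContDiffOn ℝ 1 (fderiv ℝ f) U := hf.fderiv_of_isOpen hUo (by norm_num)
    have h2 : ContDiffOn ℝ 1 φ U :=
      (ContinuousLinearMap.apply ℝ ℝ v).contDiff.comp_contDiffOn h1
    exact (h2.differentiableOn one_ne_zero).differentiableAt (hUo.mem_nhds hx₀)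
  set g : ℝ → ℝ := fun t => f (ℓ t) with hg
  have hder : ∀ᶠ t in 𝓝 (0:ℝ), deriv g t = φ (ℓ t) := by
    filter_upwards [hU'] with t ht
    exact (((hfd _ ht).hasFDerivAt).comp_hasDerivAt t (hℓd t)).deriv
  have hgd : ∀ᶠ t in 𝓝 (0:ℝ), DifferentiableAt ℝ g t := by
    filter_upwards [hU'] with t ht
    exact (hfd _ ht).comp t (hℓd t).differentiableAt
  have hφℓ : HasDerivAt (fun t => φ (ℓ t)) (fderiv ℝ φ x₀ v) 0 := by
    have h1 : HasFDerivAt φ (fderiv ℝ φ x₀) (ℓ 0) := hℓ0 ▸ hφd.hasFDerivAt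
    exact h1.comp_hasDerivAt 0 (hℓd 0)
  have heq : deriv g =ᶠ[𝓝 (0:ℝ)] fun t => φ (ℓ t) := hder
  have hd2 : DifferentiableAt ℝ (deriv g) 0 :=
    (heq.differentiableAt_iff).2 hφℓ.differentiableAt
  have hgmax : IsLocalMax g 0 := by
    have h1 : Tendsto ℓ (𝓝 0) (𝓝 x₀) := hℓ0 ▸ (hℓd 0).continuousAt
    have := h1.eventually hmax
    simpa [IsLocalMax, IsMaxFilter, hg, hℓ0] using this
  have hfinal := secondDerivTest hgd hd2 hgmax
  rwa [heq.deriv_eq, hφℓ.deriv] at hfinal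

noncomputable def lap {n : ℕ} (u : EuclideanSpace ℝ (Fin n) → ℝ) (x : EuclideanSpace ℝ (Fin n)) : ℝ :=
  ∑ i : Fin n, fderiv ℝ (fun y => fderiv ℝ u y (EuclideanSpace.single i 1)) x
    (EuclideanSpace.single i 1)

theorem stmt_1
    {n : ℕ} (hn : 2 ≤ n)
    (U : Set (EuclideanSpace ℝ (Fin n))) (hUo : IsOpen U) (hUb : Bornology.IsBounded U)
    (ψ : EuclideanSpace ℝ (Fin n) → ℝ) (hψ : ContDiff ℝ (⊤ : ℕ∞) ψ)
    (hψ0 : ∀ x ∈ frontier U, 0 ≤ ψ x)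
    (H : EuclideanSpace ℝ (Fin n) → EuclideanSpace ℝ (Fin n) → ℝ)
    (hH : ContDiff ℝ (⊤ : ℕ∞) (fun q : EuclideanSpace ℝ (Fin n) × EuclideanSpace ℝ (Fin n) => H q.1 q.2))
    (γ : ℝ → ℝ) (hγ : ContDiff ℝ (⊤ : ℕ∞) γ) (hγnn : ∀ s, 0 ≤ γ s)
    (hγ0 : ∀ s ≤ (0:ℝ), γ s = 0) (hγpos : ∀ s, 0 < s → 0 < γ s)
    (hγ' : ∀ s, 0 < s → 0 < deriv γ s ∧ deriv γ s ≤ 1)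
    (hγtop : Tendsto γ atTop atTop)
 :
    ∃ C > (0:ℝ), ∀ ε ∈ Set.Ioo (0:ℝ) 1,
      ∀ u : EuclideanSpace ℝ (Fin n) → ℝ,
        ContDiffOn ℝ 2 u U → ContinuousOn u (closure U) →
        (∀ x ∈ U, u x + H x (gradient u x) + γ ((u x - ψ x) / ε) = ε * lap u x) →
        (∀ x ∈ frontier U, u x = 0) →
        ∀ x ∈ closure U, γ ((u x - ψ x) / ε) ≤ C ∧ (u x - ψ x) / ε ≤ C := by
  -- monotonicity of γ on [0, ∞)
  have hγmono : MonotoneOn γ (Ici (0:ℝ)) := by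
    apply monotoneOn_of_deriv_nonneg (convex_Ici 0) hγ.continuous.continuousOn
      ((hγ.differentiable (by simp)).differentiableOn)
    intro s hs
    rw [interior_Ici] at hs
    exact (hγ' s hs).1.le
  -- compactness
  have hK : IsCompact (closure U) := hUb.isCompact_closure
  -- continuity of the bound function
  have hfdψ : ContDiff ℝ (⊤ : ℕ∞) (fderiv ℝ ψ) := hψ.fderiv_right (by simp)
  have hψent : ∀ v : EuclideanSpace ℝ (Fin n),
      ContDiff ℝ (⊤ : ℕ∞) (fun y => fderiv ℝ ψ y v) := fun v =>
    (ContinuousLinearMap.apply ℝ ℝ v).contDiff.comp hfdψ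
  have hlapc : Continuous (lap ψ) := by
    unfold lap
    apply continuous_finset_sum
    intro i _
    exact (((hψent _).fderiv_right (m := 1) (by norm_cast)).continuous).clm_apply continuous_const
  have hgradc : Continuous (fun x => gradient ψ x) := by
    show Continuous fun x =>
      (InnerProductSpace.toDual ℝ (EuclideanSpace ℝ (Fin n))).symm (fderiv ℝ ψ x)
    exact (InnerProductSpace.toDual ℝ _).symm.continuous.comp hfdψ.continuous
  have hHc : Continuous (fun x => H x (gradient ψ x)) :=
    hH.continuous.comp (continuous_id.prodMk hgradc)
  set F : EuclideanSpace ℝ (Fin n) → ℝ :=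
    fun x => |lap ψ x| + |ψ x| + |H x (gradient ψ x)| with hF
  have hFc : Continuous F := (hlapc.abs.add (hψ.continuous.abs)).add hHc.abs
  obtain ⟨C₀, hC₀⟩ := hK.exists_bound_of_continuousOn hFc.continuousOn
  set C₁ : ℝ := max C₀ 0 with hC₁
  have hC₁0 : (0:ℝ) ≤ C₁ := le_max_right _ _
  have hFB : ∀ x ∈ closure U, F x ≤ C₁ := by
    intro x hx
    calc F x ≤ ‖F x‖ := le_abs_self _
    _ ≤ C₀ := hC₀ x hx
    _ ≤ C₁ := le_max_left _ _
  -- choose s₀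
  obtain ⟨s₀, hs₀γ, hs₀1⟩ := ((hγtop.eventually_gt_atTop C₁).and (eventually_ge_atTop (1:ℝ))).exists
  refine ⟨C₁ + s₀, by linarith, ?_⟩
  intro ε hε u hu huc hpde hbd
  have hεpos : 0 < ε := hε.1
  -- key claim
  have key : ∀ y ∈ closure U, γ ((u y - ψ y) / ε) ≤ C₁ := by
    intro y₁ hy₁
    have hcont : ContinuousOn (fun y => u y - ψ y) (closure U) :=
      huc.sub hψ.continuous.continuousOn
    obtain ⟨x₀, hx₀K, hmax⟩ := hK.exists_isMaxOn ⟨y₁, hy₁⟩ hcont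
    by_cases hM : u x₀ - ψ x₀ ≤ 0
    · have hneg : u y₁ - ψ y₁ ≤ 0 := le_trans (hmax hy₁) hM
      rw [hγ0 _ (div_nonpos_iff.2 (Or.inr ⟨hneg, hεpos.le⟩))]
      exact hC₁0
    · push_neg at hM
      have hx₀U : x₀ ∈ U := by
        by_contra h
        have hfr : x₀ ∈ frontier U := by
          rw [frontier, hUo.interior_eq]
          exact ⟨hx₀K, h⟩
        have h1 := hbd x₀ hfr
        have h2 := hψ0 x₀ hfr
        linarith
      have hloc : IsLocalMax (fun y => u y - ψ y) x₀ :=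
        hmax.isLocalMax (Filter.mem_of_superset (hUo.mem_nhds hx₀U) subset_closure)
      have hf2 : ContDiffOn ℝ 2 (fun y => u y - ψ y) U :=
        hu.sub (hψ.of_le (by norm_cast)).contDiffOn
      have hudiff : ∀ y ∈ U, DifferentiableAt ℝ u y := fun y hy =>
        (hu.differentiableOn (by norm_num)).differentiableAt (hUo.mem_nhds hy)
      have hψdiff : ∀ y, DifferentiableAt ℝ ψ y := fun y =>
        (hψ.differentiable (by simp)).differentiableAt
      have hfder : fderiv ℝ (fun y => u y - ψ y) x₀ = 0 := hloc.fderiv_eq_zero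
      have hfeq : fderiv ℝ u x₀ = fderiv ℝ ψ x₀ := by
        rw [fderiv_fun_sub (hudiff _ hx₀U) (hψdiff _)] at hfder
        exact sub_eq_zero.1 hfder
      have hgradeq : gradient u x₀ = gradient ψ x₀ := by
        unfold gradient
        rw [hfeq]
      -- laplacian comparison
      have hlap : lap u x₀ ≤ lap ψ x₀ := by
        unfold lap
        apply Finset.sum_le_sum
        intro i _
        set v := EuclideanSpace.single i (1:ℝ) with hv
        have hφu : DifferentiableAt ℝ (fun y => fderiv ℝ u y v) x₀ := by
          have h1 : ContDiffOn ℝ 1 (fderiv ℝ u) U := hu.fderiv_of_isOpen hUo (by norm_num)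
          have h2 : ContDiffOn ℝ 1 (fun y => fderiv ℝ u y v) U :=
            (ContinuousLinearMap.apply ℝ ℝ v).contDiff.comp_contDiffOn h1
          exact (h2.differentiableOn one_ne_zero).differentiableAt (hUo.mem_nhds hx₀U)
        have hφψ : DifferentiableAt ℝ (fun y => fderiv ℝ ψ y v) x₀ :=
          ((hψent v).differentiable (by simp)).differentiableAt
        have hev : (fun y => fderiv ℝ (fun z => u z - ψ z) y v)
            =ᶠ[𝓝 x₀] (fun y => fderiv ℝ u y v - fderiv ℝ ψ y v) := by
          filter_upwards [hUo.mem_nhds hx₀U] with y hy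
          rw [fderiv_fun_sub (hudiff _ hy) (hψdiff _)]
          simp
        have h1 : fderiv ℝ (fun y => fderiv ℝ (fun z => u z - ψ z) y v) x₀ v =
            fderiv ℝ (fun y => fderiv ℝ u y v) x₀ v -
              fderiv ℝ (fun y => fderiv ℝ ψ y v) x₀ v := by
          rw [hev.fderiv_eq, fderiv_fun_sub hφu hφψ]
          simp
        have h2 := entry_nonpos hUo hf2 hx₀U hloc v
        rw [h1] at h2
        linarith
      -- use the PDE at x₀
      have hpde₀ := hpde x₀ hx₀U
      rw [hgradeq] at hpde₀
      have hx₀cl : x₀ ∈ closure U := subset_closure hx₀U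
      have hub : -u x₀ ≤ |ψ x₀| := by
        have := neg_abs_le (ψ x₀)
        linarith
      have hlapb : ε * lap u x₀ ≤ |lap ψ x₀| := by
        have h1 : ε * lap u x₀ ≤ ε * lap ψ x₀ := by
          exact mul_le_mul_of_nonneg_left hlap hεpos.le
        have h2 : ε * lap ψ x₀ ≤ ε * |lap ψ x₀| :=
          mul_le_mul_of_nonneg_left (le_abs_self _) hεpos.le
        have h3 : ε * |lap ψ x₀| ≤ 1 * |lap ψ x₀| :=
          mul_le_mul_of_nonneg_right (by linarith [hε.2]) (abs_nonneg _)
        linarith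
      have hHb : -H x₀ (gradient ψ x₀) ≤ |H x₀ (gradient ψ x₀)| := neg_le_abs _
      have hγx₀ : γ ((u x₀ - ψ x₀) / ε) ≤ C₁ := by
        have h4 : |lap ψ x₀| + |ψ x₀| + |H x₀ (gradient ψ x₀)| ≤ C₁ := hFB x₀ hx₀cl
        linarith
      -- transfer to y₁
      by_cases hy : u y₁ - ψ y₁ ≤ 0
      · rw [hγ0 _ (div_nonpos_iff.2 (Or.inr ⟨hy, hεpos.le⟩))]
        exact hC₁0
      · push_neg at hy
        have hle : (u y₁ - ψ y₁) / ε ≤ (u x₀ - ψ x₀) / ε :=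
          (div_le_div_iff_of_pos_right hεpos).2 (hmax hy₁)
        have h1 : (0:ℝ) ≤ (u y₁ - ψ y₁) / ε := le_of_lt (div_pos hy hεpos)
        have h2 : (0:ℝ) ≤ (u x₀ - ψ x₀) / ε := le_of_lt (div_pos hM hεpos)
        exact (hγmono h1 h2 hle).trans hγx₀
  -- conclude
  intro x hx
  constructor
  · exact (key x hx).trans (by linarith)
  · by_cases hs : (u x - ψ x) / ε ≤ 0
    · linarith
    · push_neg at hs
      have hss₀ : (u x - ψ x) / ε ≤ s₀ := by
        by_contra hgt
        push_neg at hgt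
        have hmono := hγmono (by linarith : (0:ℝ) ≤ s₀) hs.le hgt.le
        have := key x hx
        linarith
      linarith
end

section
/- Assume (H3.2) and (H3.3). Then there exists a constant C > 0, independent of ε, such that for every ε > 0 and every pair (u₁^ε, u₂^ε) ∈ (C²(U) ∩ C(Ū))² solving the regularized weakly coupled system, one has ‖u₁^ε‖_{L∞(Ū)} ≤ C and ‖u₂^ε‖_{L∞(Ū)} ≤ C. -/
open Set Filter

open Topology

lemma sd_nonpos {f : ℝ → ℝ} {d : ℝ} (hdiff : ∀ᶠ t in 𝓝 (0:ℝ), DifferentiableAt ℝ f t)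
    (hd : HasDerivAt (deriv f) d 0) (hmax : IsLocalMax f 0) : d ≤ 0 := by
  by_contra hpos
  push_neg at hpos
  have h0 : deriv f 0 = 0 := hmax.deriv_eq_zero
  have hslope : Tendsto (slope (deriv f) 0) (𝓝[>] (0:ℝ)) (𝓝 d) :=
    (hasDerivAt_iff_tendsto_slope.1 hd).mono_left
      (nhdsWithin_mono _ fun x hx => ne_of_gt hx)
  have h1 : ∀ᶠ t in 𝓝[>] (0:ℝ), 0 < deriv f t := by
    filter_upwards [hslope.eventually (eventually_gt_nhds hpos : ∀ᶠ y in 𝓝 d, 0 < y),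
      self_mem_nhdsWithin] with t ht ht0
    have hs : slope (deriv f) 0 t = deriv f t / t := by
      simp [slope_def_field, h0]
    rw [hs] at ht
    have ht0' : (0:ℝ) < t := ht0
    rcases div_pos_iff.mp ht with h | h
    · exact h.1
    · linarith [h.2]
  -- extract a δ-interval
  obtain ⟨δ₁, hδ₁, hball⟩ := Metric.eventually_nhds_iff_ball.1 (hdiff.and hmax)
  obtain ⟨δ₂, hδ₂mem, hIoo⟩ := mem_nhdsGT_iff_exists_Ioo_subset.1 h1
  set δ : ℝ := min (δ₁ / 2) (δ₂ / 2) with hδdef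
  have hδpos : 0 < δ := by have h2 : (0:ℝ) < δ₂ := hδ₂mem; exact lt_min (by linarith) (by linarith)
  have hsub : Icc (0:ℝ) δ ⊆ Metric.ball 0 δ₁ := by
    intro t ⟨h1', h2'⟩
    simp only [Metric.mem_ball, Real.dist_eq, sub_zero]
    rw [abs_of_nonneg h1']
    calc t ≤ δ := h2'
      _ ≤ δ₁/2 := min_le_left _ _
      _ < δ₁ := by linarith
  have hmono : StrictMonoOn f (Icc (0:ℝ) δ) := by
    apply strictMonoOn_of_deriv_pos (convex_Icc _ _)
    · intro t ht
      exact ((hball t (hsub ht)).1).continuousAt.continuousWithinAt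
    · intro t ht
      rw [interior_Icc] at ht
      apply hIoo
      constructor
      · exact ht.1
      · calc t < δ := ht.2
          _ ≤ δ₂/2 := min_le_right _ _
          _ < δ₂ := by
              have : (0:ℝ) < δ₂ := hδ₂mem
              linarith
  have hlt : f 0 < f δ := hmono (left_mem_Icc.2 hδpos.le) (right_mem_Icc.2 hδpos.le) hδpos
  have : f δ ≤ f 0 := (hball δ (hsub (right_mem_Icc.2 hδpos.le))).2
  linarith

lemma dir2_nonpos {n : ℕ} {U : Set (EuclideanSpace ℝ (Fin n))} (hUo : IsOpen U)
    {u : EuclideanSpace ℝ (Fin n) → ℝ} (hu : ContDiffOn ℝ 2 u U)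
    {x₀ : EuclideanSpace ℝ (Fin n)} (hx : x₀ ∈ U) (hm : IsLocalMax u x₀)
    (v : EuclideanSpace ℝ (Fin n)) :
    fderiv ℝ (fun y => fderiv ℝ u y v) x₀ v ≤ 0 := by
  set c : ℝ → EuclideanSpace ℝ (Fin n) := fun t => x₀ + t • v with hc
  have hc0 : c 0 = x₀ := by simp [hc]
  have hcderiv : ∀ t, HasDerivAt c v t := by
    intro t
    simpa [hc] using ((hasDerivAt_id t).smul_const v).const_add x₀
  have hccont : Continuous c := by continuity
  have hctend : Tendsto c (𝓝 0) (𝓝 x₀) := by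
    rw [← hc0]; exact hccont.continuousAt
  -- u is C² at each point of U
  have hCAt : ∀ y ∈ U, ContDiffAt ℝ 2 u y := fun y hy => hu.contDiffAt (hUo.mem_nhds hy)
  -- f = u ∘ c
  set f : ℝ → ℝ := fun t => u (c t) with hf
  have hVmem : ∀ᶠ t in 𝓝 (0:ℝ), c t ∈ U := hctend.eventually (hUo.eventually_mem hx)
  have hfd : ∀ᶠ t in 𝓝 (0:ℝ), HasDerivAt f (fderiv ℝ u (c t) v) t := by
    filter_upwards [hVmem] with t ht
    exact (((hCAt _ ht).differentiableAt two_ne_zero).hasFDerivAt).comp_hasDerivAt t (hcderiv t)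
  have hdiff : ∀ᶠ t in 𝓝 (0:ℝ), DifferentiableAt ℝ f t := by
    filter_upwards [hfd] with t ht using ht.differentiableAt
  have hderiv_eq : ∀ᶠ t in 𝓝 (0:ℝ), deriv f t = fderiv ℝ u (c t) v := by
    filter_upwards [hfd] with t ht using ht.deriv
  -- g y = fderiv u y v is differentiable at x₀
  set g : EuclideanSpace ℝ (Fin n) → ℝ := fun y => fderiv ℝ u y v with hg
  have hfd1 : ContDiffAt ℝ 1 (fderiv ℝ u) x₀ := by
    have := (hCAt x₀ hx).fderiv_right (m := 1) (by norm_num)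
    exact this
  have hgdiff : DifferentiableAt ℝ g x₀ := by
    have happ : g = (fun L : EuclideanSpace ℝ (Fin n) →L[ℝ] ℝ => L v) ∘ (fderiv ℝ u) := rfl
    rw [happ]
    exact ((ContinuousLinearMap.apply ℝ ℝ v).differentiableAt).comp x₀
      (hfd1.differentiableAt one_ne_zero)
  have hgc : HasDerivAt (fun t => g (c t)) (fderiv ℝ g x₀ v) 0 := by
    have hg' : HasFDerivAt g (fderiv ℝ g x₀) (c 0) := by rw [hc0]; exact hgdiff.hasFDerivAt
    exact hg'.comp_hasDerivAt 0 (hcderiv 0)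
  -- deriv f =ᶠ g ∘ c near 0
  have heq : (fun t => g (c t)) =ᶠ[𝓝 (0:ℝ)] deriv f := by
    filter_upwards [hderiv_eq] with t ht using ht.symm
  have hdd : HasDerivAt (deriv f) (fderiv ℝ g x₀ v) 0 := by
    exact hgc.congr_of_eventuallyEq heq.symm
  have hfmax : IsLocalMax f 0 := by
    have : ∀ᶠ t in 𝓝 (0:ℝ), u (c t) ≤ u x₀ := hctend.eventually hm
    simpa [hf, IsLocalMax, IsMaxFilter, hc0] using this
  exact sd_nonpos hdiff hdd hfmax


lemma grad_zero_of_localmax {n : ℕ} {u : EuclideanSpace ℝ (Fin n) → ℝ}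
    {x₀ : EuclideanSpace ℝ (Fin n)} (hm : IsLocalMax u x₀) : gradient u x₀ = 0 := by
  unfold gradient
  rw [hm.fderiv_eq_zero]
  simp

lemma lap_nonpos_of_localmax {n : ℕ} {U : Set (EuclideanSpace ℝ (Fin n))} (hUo : IsOpen U)
    {u : EuclideanSpace ℝ (Fin n) → ℝ} (hu : ContDiffOn ℝ 2 u U)
    {x₀ : EuclideanSpace ℝ (Fin n)} (hx : x₀ ∈ U) (hm : IsLocalMax u x₀) :
    lap u x₀ ≤ 0 := by
  unfold lap
  apply Finset.sum_nonpos
  intro i _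
  exact dir2_nonpos hUo hu hx hm _

lemma lap_neg {n : ℕ} (u : EuclideanSpace ℝ (Fin n) → ℝ) (x : EuclideanSpace ℝ (Fin n)) :
    lap (fun y => -u y) x = - lap u x := by
  unfold lap
  rw [← Finset.sum_neg_distrib]
  congr 1; funext i
  have h1 : (fun y => fderiv ℝ (fun z => -u z) y (EuclideanSpace.single i 1))
      = fun y => -(fderiv ℝ u y (EuclideanSpace.single i 1)) := by
    funext y; rw [fderiv_fun_neg]; simp
  rw [h1, fderiv_fun_neg]
  simp

lemma grad_neg {n : ℕ} (u : EuclideanSpace ℝ (Fin n) → ℝ) (x : EuclideanSpace ℝ (Fin n)) :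
    gradient (fun y => -u y) x = - gradient u x := by
  unfold gradient
  rw [fderiv_fun_neg]
  simp

lemma grad_zero_of_localmin {n : ℕ} {u : EuclideanSpace ℝ (Fin n) → ℝ}
    {x₀ : EuclideanSpace ℝ (Fin n)} (hm : IsLocalMin u x₀) : gradient u x₀ = 0 := by
  unfold gradient
  rw [hm.fderiv_eq_zero]
  simp

lemma lap_nonneg_of_localmin {n : ℕ} {U : Set (EuclideanSpace ℝ (Fin n))} (hUo : IsOpen U)
    {u : EuclideanSpace ℝ (Fin n) → ℝ} (hu : ContDiffOn ℝ 2 u U)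
    {x₀ : EuclideanSpace ℝ (Fin n)} (hx : x₀ ∈ U) (hm : IsLocalMin u x₀) :
    0 ≤ lap u x₀ := by
  have h1 : IsLocalMax (fun y => -u y) x₀ := hm.neg
  have h2 : ContDiffOn ℝ 2 (fun y => -u y) U := hu.neg
  have := lap_nonpos_of_localmax hUo h2 hx h1
  rw [lap_neg] at this
  linarith

theorem stmt_5
    {n : ℕ} (hn : 2 ≤ n)
    (U : Set (EuclideanSpace ℝ (Fin n))) (hUo : IsOpen U) (hUb : Bornology.IsBounded U)
    (H₁ H₂ : EuclideanSpace ℝ (Fin n) → EuclideanSpace ℝ (Fin n) → ℝ)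
    (hH₁ : ContDiff ℝ (⊤ : ℕ∞) (fun q : EuclideanSpace ℝ (Fin n) × EuclideanSpace ℝ (Fin n) => H₁ q.1 q.2))
    (hH₂ : ContDiff ℝ (⊤ : ℕ∞) (fun q : EuclideanSpace ℝ (Fin n) × EuclideanSpace ℝ (Fin n) => H₂ q.1 q.2))
    (c₁₁ c₁₂ c₂₁ c₂₂ α : ℝ) (hα : 0 < α)
    -- (H3.2)
    (h32a : c₁₂ ≤ 0) (h32b : c₂₁ ≤ 0)
    -- (H3.3)
    (h33a : α ≤ c₁₁ + c₁₂) (h33b : α ≤ c₂₁ + c₂₂)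
 :
    ∃ C > (0:ℝ), ∀ ε : ℝ, 0 < ε →
      ∀ u₁ u₂ : EuclideanSpace ℝ (Fin n) → ℝ,
        ContDiffOn ℝ 2 u₁ U → ContinuousOn u₁ (closure U) →
        ContDiffOn ℝ 2 u₂ U → ContinuousOn u₂ (closure U) →
        (∀ x ∈ U, c₁₁ * u₁ x + c₁₂ * u₂ x + H₁ x (gradient u₁ x) = ε * lap u₁ x) →
        (∀ x ∈ U, c₂₁ * u₁ x + c₂₂ * u₂ x + H₂ x (gradient u₂ x) = ε * lap u₂ x) →
        (∀ x ∈ frontier U, u₁ x = 0) → (∀ x ∈ frontier U, u₂ x = 0) →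
        ∀ x ∈ closure U, |u₁ x| ≤ C ∧ |u₂ x| ≤ C := by
  -- bound the Hamiltonians at zero gradient on the compact closure
  have hK : IsCompact (closure U) := hUb.isCompact_closure
  have hcont1 : ContinuousOn (fun x => H₁ x 0) (closure U) :=
    (hH₁.continuous.comp (continuous_id.prodMk continuous_const)).continuousOn
  have hcont2 : ContinuousOn (fun x => H₂ x 0) (closure U) :=
    (hH₂.continuous.comp (continuous_id.prodMk continuous_const)).continuousOn
  obtain ⟨B₁, hB₁⟩ := hK.exists_bound_of_continuousOn hcont1
  obtain ⟨B₂, hB₂⟩ := hK.exists_bound_of_continuousOn hcont2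
  set B : ℝ := max (max B₁ B₂) 0 with hBdef
  have hBnn : 0 ≤ B := le_max_right _ _
  have hB1' : ∀ x ∈ closure U, |H₁ x 0| ≤ B := fun x hx =>
    le_trans (hB₁ x hx) (le_trans (le_max_left _ _) (le_max_left _ _))
  have hB2' : ∀ x ∈ closure U, |H₂ x 0| ≤ B := fun x hx =>
    le_trans (hB₂ x hx) (le_trans (le_max_right _ _) (le_max_left _ _))
  refine ⟨B / α + 1, by positivity, ?_⟩
  intro ε hε u₁ u₂ hu₁ hc₁ hu₂ hc₂ pde₁ pde₂ hb₁ hb₂ x hxK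
  have hne : (closure U).Nonempty := ⟨x, hxK⟩
  have hUK : U ⊆ closure U := subset_closure
  have hfr : ∀ y ∈ closure U, y ∉ U → y ∈ frontier U := by
    intro y hy hyU
    rw [frontier, hUo.interior_eq]
    exact ⟨hy, hyU⟩
  -- maximum of max(u₁,u₂)
  obtain ⟨z, hzK, hzmax⟩ := hK.exists_isMaxOn hne (hc₁.sup hc₂)
  set M : ℝ := max (u₁ z) (u₂ z) with hMdef
  have hMax : ∀ y ∈ closure U, u₁ y ≤ M ∧ u₂ y ≤ M := by
    intro y hy
    have h := isMaxOn_iff.1 hzmax y hy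
    exact ⟨le_trans (le_max_left _ _) h, le_trans (le_max_right _ _) h⟩
  have hMle : M ≤ B / α := by
    by_cases hM0 : M ≤ 0
    · exact le_trans hM0 (by positivity)
    push_neg at hM0
    have hzU : z ∈ U := by
      by_contra hzU
      have hfz := hfr z hzK hzU
      have : M = 0 := by rw [hMdef, hb₁ z hfz, hb₂ z hfz]; simp
      linarith
    rcases le_total (u₁ z) (u₂ z) with hcase | hcase
    · -- M = u₂ z
      have hMe : M = u₂ z := max_eq_right hcase
      have hloc : IsLocalMax u₂ z := by
        filter_upwards [hUo.mem_nhds hzU] with y hy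
        rw [← hMe] at *
        exact (hMax y (hUK hy)).2
      have hg0 : gradient u₂ z = 0 := grad_zero_of_localmax hloc
      have hlap : lap u₂ z ≤ 0 := lap_nonpos_of_localmax hUo hu₂ hzU hloc
      have hpde := pde₂ z hzU
      rw [hg0] at hpde
      have hH : |H₂ z 0| ≤ B := hB2' z hzK
      have h1 : c₂₁ * u₁ z + c₂₂ * u₂ z + H₂ z 0 ≤ 0 := by
        rw [hpde]; exact mul_nonpos_of_nonneg_of_nonpos hε.le hlap
      have hu1M : u₁ z ≤ M := (hMax z hzK).1
      have habs := abs_le.1 hH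
      have key : α * M ≤ B := by
        have e1 : c₂₁ * M ≤ c₂₁ * u₁ z := mul_le_mul_of_nonpos_left hu1M h32b
        nlinarith [mul_le_mul_of_nonneg_right h33b hM0.le]
      rw [le_div_iff₀ hα]
      linarith [key]
    · -- M = u₁ z
      have hMe : M = u₁ z := max_eq_left hcase
      have hloc : IsLocalMax u₁ z := by
        filter_upwards [hUo.mem_nhds hzU] with y hy
        rw [← hMe] at *
        exact (hMax y (hUK hy)).1
      have hg0 : gradient u₁ z = 0 := grad_zero_of_localmax hloc
      have hlap : lap u₁ z ≤ 0 := lap_nonpos_of_localmax hUo hu₁ hzU hloc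
      have hpde := pde₁ z hzU
      rw [hg0] at hpde
      have hH : |H₁ z 0| ≤ B := hB1' z hzK
      have h1 : c₁₁ * u₁ z + c₁₂ * u₂ z + H₁ z 0 ≤ 0 := by
        rw [hpde]; exact mul_nonpos_of_nonneg_of_nonpos hε.le hlap
      have hu2M : u₂ z ≤ M := (hMax z hzK).2
      have habs := abs_le.1 hH
      have key : α * M ≤ B := by
        have e1 : c₁₂ * M ≤ c₁₂ * u₂ z := mul_le_mul_of_nonpos_left hu2M h32a
        nlinarith [mul_le_mul_of_nonneg_right h33a hM0.le]
      rw [le_div_iff₀ hα]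
      linarith [key]
  -- minimum of min(u₁,u₂)
  obtain ⟨w, hwK, hwmin⟩ := hK.exists_isMinOn hne (hc₁.inf hc₂)
  set m : ℝ := min (u₁ w) (u₂ w) with hmdef
  have hMin : ∀ y ∈ closure U, m ≤ u₁ y ∧ m ≤ u₂ y := by
    intro y hy
    have h := isMinOn_iff.1 hwmin y hy
    exact ⟨le_trans h (min_le_left _ _), le_trans h (min_le_right _ _)⟩
  have hmge : -(B / α) ≤ m := by
    by_cases hm0 : 0 ≤ m
    · have : (0:ℝ) ≤ B / α := by positivity
      linarith
    push_neg at hm0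
    have hwU : w ∈ U := by
      by_contra hwU
      have hfw := hfr w hwK hwU
      have : m = 0 := by rw [hmdef, hb₁ w hfw, hb₂ w hfw]; simp
      linarith
    rcases le_total (u₁ w) (u₂ w) with hcase | hcase
    · -- m = u₁ w
      have hme : m = u₁ w := min_eq_left hcase
      have hloc : IsLocalMin u₁ w := by
        filter_upwards [hUo.mem_nhds hwU] with y hy
        rw [← hme] at *
        exact (hMin y (hUK hy)).1
      have hg0 : gradient u₁ w = 0 := grad_zero_of_localmin hloc
      have hlap : 0 ≤ lap u₁ w := lap_nonneg_of_localmin hUo hu₁ hwU hloc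
      have hpde := pde₁ w hwU
      rw [hg0] at hpde
      have hH : |H₁ w 0| ≤ B := hB1' w hwK
      have h1 : 0 ≤ c₁₁ * u₁ w + c₁₂ * u₂ w + H₁ w 0 := by
        rw [hpde]; exact mul_nonneg hε.le hlap
      have hu2m : m ≤ u₂ w := (hMin w hwK).2
      have habs := abs_le.1 hH
      have key : -B ≤ α * m := by
        have e1 : c₁₂ * u₂ w ≤ c₁₂ * m := mul_le_mul_of_nonpos_left hu2m h32a
        nlinarith [mul_le_mul_of_nonpos_right h33a hm0.le]
      rw [neg_le, le_div_iff₀ hα]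
      linarith [key]
    · -- m = u₂ w
      have hme : m = u₂ w := min_eq_right hcase
      have hloc : IsLocalMin u₂ w := by
        filter_upwards [hUo.mem_nhds hwU] with y hy
        rw [← hme] at *
        exact (hMin y (hUK hy)).2
      have hg0 : gradient u₂ w = 0 := grad_zero_of_localmin hloc
      have hlap : 0 ≤ lap u₂ w := lap_nonneg_of_localmin hUo hu₂ hwU hloc
      have hpde := pde₂ w hwU
      rw [hg0] at hpde
      have hH : |H₂ w 0| ≤ B := hB2' w hwK
      have h1 : 0 ≤ c₂₁ * u₁ w + c₂₂ * u₂ w + H₂ w 0 := by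
        rw [hpde]; exact mul_nonneg hε.le hlap
      have hu1m : m ≤ u₁ w := (hMin w hwK).1
      have habs := abs_le.1 hH
      have key : -B ≤ α * m := by
        have e1 : c₂₁ * u₁ w ≤ c₂₁ * m := mul_le_mul_of_nonpos_left hu1m h32b
        nlinarith [mul_le_mul_of_nonpos_right h33b hm0.le]
      rw [neg_le, le_div_iff₀ hα]
      linarith [key]
  -- conclude
  have hx1 := hMax x hxK
  have hx2 := hMin x hxK
  constructor
  · rw [abs_le]; constructor <;> [linarith [hx2.1]; linarith [hx1.1]]
  · rw [abs_le]; constructor <;> [linarith [hx2.2]; linarith [hx1.2]]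
end

section
/- Let ε > 0, let b₁, b₂: Ū → ℝⁿ be continuous, let f₁, f₂: U → ℝ be continuous with f₁, f₂ ≥ 0 in U, and let the constants c₁₁, c₁₂, c₂₁, c₂₂ satisfy (H3.2) and (H3.3). If z₁, z₂ ∈ C²(U) ∩ C(Ū) satisfy c₁₁z₁ + c₁₂z₂ + b₁(x)·Dz₁ − εΔz₁ = f₁ and c₂₁z₁ + c₂₂z₂ + b₂(x)·Dz₂ − εΔz₂ = f₂ in U, with z₁ = z₂ = 0 on ∂U, then z₁ ≥ 0 and z₂ ≥ 0 on Ū. -/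
/-!
Take a point `x₀` where `min z₁ z₂` attains its minimum over the compact set `closure U`. If that
minimum were negative, `x₀` would lie in `U` (the boundary values vanish), and the component `zⱼ`
realising it would have a local minimum there: `∇zⱼ(x₀) = 0` and `Δzⱼ(x₀) ≥ 0`. Since the
off-diagonal coefficient is `≤ 0` and the other component is `≥ zⱼ(x₀)`, the left-hand side of
the `j`-th equation is at most `(cⱼ₁ + cⱼ₂) zⱼ(x₀) < 0`, contradicting `fⱼ ≥ 0`.
-/

open Set Filter Topology

theorem IsLocalMin.of_le {α β : Type*} [TopologicalSpace α] [Preorder β] {f g : α → β} {a : α}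
    (h : IsLocalMin f a) (hle : ∀ y, f y ≤ g y) (heq : g a = f a) : IsLocalMin g a :=
  h.mono fun y hy => heq ▸ hy.trans (hle y)

theorem IsLocalMin.deriv_deriv_nonneg {g : ℝ → ℝ} {t : ℝ} (hmin : IsLocalMin g t)
    (hg : ContinuousAt g t) : 0 ≤ deriv (deriv g) t := by
  by_contra! hneg
  -- The sufficient second-derivative test makes `t` also a local maximum, so `g` is locally
  -- constant and its second derivative at `t` vanishes.
  have hmax : IsLocalMax g t := isLocalMax_of_deriv_deriv_neg hneg hmin.deriv_eq_zero hg
  have hconst : g =ᶠ[𝓝 t] fun _ => g t :=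
    (hmin.and hmax).mono fun s hs => le_antisymm hs.2 hs.1
  have hzero : deriv (deriv g) t = 0 := by
    rw [hconst.deriv.deriv_eq]
    simp
  exact hneg.ne hzero

theorem IsLocalMin.fderiv_fderiv_apply_nonneg {E : Type*} [NormedAddCommGroup E]
    [NormedSpace ℝ E] {u : E → ℝ} {x₀ : E} (hmin : IsLocalMin u x₀) (hu : ContDiffAt ℝ 2 u x₀)
    (v : E) : 0 ≤ fderiv ℝ (fun y => fderiv ℝ u y v) x₀ v := by
  set ℓ : ℝ → E := fun t => x₀ + t • v
  have hℓ : ∀ t, HasDerivAt ℓ v t := fun t => by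
    simpa only [one_smul] using ((hasDerivAt_id' t).smul_const v).const_add x₀
  have hℓc : ContinuousAt ℓ 0 := (hℓ 0).continuousAt
  have hℓ0 : ℓ 0 = x₀ := by simp [ℓ]
  rw [← hℓ0] at hmin hu ⊢
  have hu_diff : ∀ᶠ t in 𝓝 (0 : ℝ), DifferentiableAt ℝ u (ℓ t) :=
    hℓc.tendsto.eventually <|
      (hu.eventually (by simp)).mono fun y hy => hy.differentiableAt (by norm_num)
  have hderiv : deriv (u ∘ ℓ) =ᶠ[𝓝 0] fun t => fderiv ℝ u (ℓ t) v :=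
    hu_diff.mono fun t ht => (ht.hasFDerivAt.comp_hasDerivAt t (hℓ t)).deriv
  have hfderiv_diff : DifferentiableAt ℝ (fun y => fderiv ℝ u y v) (ℓ 0) :=
    ((hu.fderiv_right (m := 1) le_rfl).differentiableAt one_ne_zero).clm_apply
      (differentiableAt_const v)
  have hsecond : deriv (deriv (u ∘ ℓ)) 0 = fderiv ℝ (fun y => fderiv ℝ u y v) (ℓ 0) v := by
    rw [hderiv.deriv_eq]
    exact (hfderiv_diff.hasFDerivAt.comp_hasDerivAt 0 (hℓ 0)).deriv
  rw [← hsecond]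
  exact (hmin.comp_continuous hℓc).deriv_deriv_nonneg (hu.continuousAt.comp hℓc)

theorem IsLocalMin.lap_nonneg {n : ℕ} {u : EuclideanSpace ℝ (Fin n) → ℝ}
    {x : EuclideanSpace ℝ (Fin n)} (hmin : IsLocalMin u x) (hu : ContDiffAt ℝ 2 u x) :
    0 ≤ lap u x :=
  Finset.sum_nonneg fun _ _ => hmin.fderiv_fderiv_apply_nonneg hu _

theorem IsLocalMin.gradient_eq_zero {n : ℕ} {u : EuclideanSpace ℝ (Fin n) → ℝ}
    {x : EuclideanSpace ℝ (Fin n)} (hmin : IsLocalMin u x) : gradient u x = 0 := by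
  simp [gradient, hmin.fderiv_eq_zero]

/-- `s` stands for the value at `x₀` of the other component of the system. -/
theorem IsLocalMin.system_lhs_neg {n : ℕ} {z : EuclideanSpace ℝ (Fin n) → ℝ}
    {x₀ b : EuclideanSpace ℝ (Fin n)} {ε c d s : ℝ} (hmin : IsLocalMin z x₀)
    (hz : ContDiffAt ℝ 2 z x₀) (hε : 0 ≤ ε) (hd : d ≤ 0) (hcd : 0 < c + d) (hneg : z x₀ < 0)
    (hs : z x₀ ≤ s) : c * z x₀ + d * s + inner ℝ b (gradient z x₀) - ε * lap z x₀ < 0 := by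
  rw [hmin.gradient_eq_zero, inner_zero_right]
  have hlap : 0 ≤ ε * lap z x₀ := mul_nonneg hε (hmin.lap_nonneg hz)
  have hcoupling : d * s ≤ d * z x₀ := mul_le_mul_of_nonpos_left hs hd
  nlinarith

theorem stmt_7_general
    {n : ℕ}
    (U : Set (EuclideanSpace ℝ (Fin n))) (hUo : IsOpen U) (hUb : Bornology.IsBounded U)
    (ε : ℝ) (hε : 0 < ε)
    (b₁ b₂ : EuclideanSpace ℝ (Fin n) → EuclideanSpace ℝ (Fin n))
    (f₁ f₂ : EuclideanSpace ℝ (Fin n) → ℝ)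
    (hf₁ : ∀ x ∈ U, 0 ≤ f₁ x) (hf₂ : ∀ x ∈ U, 0 ≤ f₂ x)
    (c₁₁ c₁₂ c₂₁ c₂₂ α : ℝ) (hα : 0 < α)
    (h32a : c₁₂ ≤ 0) (h32b : c₂₁ ≤ 0)
    (h33a : α ≤ c₁₁ + c₁₂) (h33b : α ≤ c₂₁ + c₂₂)
    (z₁ z₂ : EuclideanSpace ℝ (Fin n) → ℝ)
    (hz₁2 : ContDiffOn ℝ 2 z₁ U) (hz₁c : ContinuousOn z₁ (closure U))
    (hz₂2 : ContDiffOn ℝ 2 z₂ U) (hz₂c : ContinuousOn z₂ (closure U))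
    (hpde₁ : ∀ x ∈ U, c₁₁ * z₁ x + c₁₂ * z₂ x + (inner ℝ (b₁ x) (gradient z₁ x) : ℝ) - ε * lap z₁ x = f₁ x)
    (hpde₂ : ∀ x ∈ U, c₂₁ * z₁ x + c₂₂ * z₂ x + (inner ℝ (b₂ x) (gradient z₂ x) : ℝ) - ε * lap z₂ x = f₂ x)
    (hzb₁ : ∀ x ∈ frontier U, z₁ x = 0) (hzb₂ : ∀ x ∈ frontier U, z₂ x = 0) :
    ∀ x ∈ closure U, 0 ≤ z₁ x ∧ 0 ≤ z₂ x := by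
  intro x hx
  set w := fun y => min (z₁ y) (z₂ y)
  obtain ⟨x₀, hx₀, hw_min⟩ := hUb.isCompact_closure.exists_isMinOn ⟨x, hx⟩ (hz₁c.inf hz₂c)
  suffices hw_nonneg : 0 ≤ w x₀ from
    ⟨(hw_nonneg.trans (hw_min hx)).trans (min_le_left _ _),
      (hw_nonneg.trans (hw_min hx)).trans (min_le_right _ _)⟩
  by_contra! hneg
  have hx₀U : x₀ ∈ U := by
    by_contra hx₀U
    have hfr : x₀ ∈ frontier U := ⟨hx₀, by rwa [hUo.interior_eq]⟩
    simp [w, hzb₁ x₀ hfr, hzb₂ x₀ hfr] at hneg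
  have hw_loc : IsLocalMin w x₀ :=
    (hw_min.on_subset subset_closure).isLocalMin (hUo.mem_nhds hx₀U)
  rcases le_total (z₁ x₀) (z₂ x₀) with hle | hle
  · have hz₁_loc : IsLocalMin z₁ x₀ :=
      hw_loc.of_le (fun _ => min_le_left _ _) (min_eq_left hle).symm
    have hlhs := hz₁_loc.system_lhs_neg (b := b₁ x₀) (c := c₁₁) (hz₁2.contDiffAt (hUo.mem_nhds hx₀U))
      hε.le h32a (by linarith) (by simpa [w, hle] using hneg) hle
    linarith [hpde₁ x₀ hx₀U, hf₁ x₀ hx₀U]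
  · have hz₂_loc : IsLocalMin z₂ x₀ :=
      hw_loc.of_le (fun _ => min_le_right _ _) (min_eq_right hle).symm
    have hlhs := hz₂_loc.system_lhs_neg (b := b₂ x₀) (c := c₂₂) (hz₂2.contDiffAt (hUo.mem_nhds hx₀U))
      hε.le h32b (by linarith) (by simpa [w, hle] using hneg) hle
    linarith [hpde₂ x₀ hx₀U, hf₂ x₀ hx₀U]

theorem stmt_7
    {n : ℕ} (hn : 2 ≤ n)
    (U : Set (EuclideanSpace ℝ (Fin n))) (hUo : IsOpen U) (hUb : Bornology.IsBounded U)
    (ε : ℝ) (hε : 0 < ε)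
    (b₁ b₂ : EuclideanSpace ℝ (Fin n) → EuclideanSpace ℝ (Fin n)) (hb₁ : ContinuousOn b₁ (closure U)) (hb₂ : ContinuousOn b₂ (closure U))
    (f₁ f₂ : EuclideanSpace ℝ (Fin n) → ℝ) (hf₁c : ContinuousOn f₁ U) (hf₂c : ContinuousOn f₂ U)
    (hf₁ : ∀ x ∈ U, 0 ≤ f₁ x) (hf₂ : ∀ x ∈ U, 0 ≤ f₂ x)
    (c₁₁ c₁₂ c₂₁ c₂₂ α : ℝ) (hα : 0 < α)
    (h32a : c₁₂ ≤ 0) (h32b : c₂₁ ≤ 0)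
    (h33a : α ≤ c₁₁ + c₁₂) (h33b : α ≤ c₂₁ + c₂₂)
    (z₁ z₂ : EuclideanSpace ℝ (Fin n) → ℝ)
    (hz₁2 : ContDiffOn ℝ 2 z₁ U) (hz₁c : ContinuousOn z₁ (closure U))
    (hz₂2 : ContDiffOn ℝ 2 z₂ U) (hz₂c : ContinuousOn z₂ (closure U))
    (hpde₁ : ∀ x ∈ U, c₁₁ * z₁ x + c₁₂ * z₂ x + (inner ℝ (b₁ x) (gradient z₁ x) : ℝ) - ε * lap z₁ x = f₁ x)
    (hpde₂ : ∀ x ∈ U, c₂₁ * z₁ x + c₂₂ * z₂ x + (inner ℝ (b₂ x) (gradient z₂ x) : ℝ) - ε * lap z₂ x = f₂ x)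
    (hzb₁ : ∀ x ∈ frontier U, z₁ x = 0) (hzb₂ : ∀ x ∈ frontier U, z₂ x = 0) :
    ∀ x ∈ closure U, 0 ≤ z₁ x ∧ 0 ≤ z₂ x :=
  stmt_7_general U hUo hUb ε hε b₁ b₂ f₁ f₂ hf₁ hf₂ c₁₁ c₁₂ c₂₁ c₂₂ α hα h32a h32b h33a h33b z₁ z₂
    hz₁2 hz₁c hz₂2 hz₂c hpde₁ hpde₂ hzb₁ hzb₂
end

section
/- Let c₁, c₂ > 0 and let H₁, H₂: ℝⁿ × ℝⁿ → ℝ be smooth and ℤⁿ-periodic in the first variable. Suppose (u₁, u₂) and (ũ₁, ũ₂) are pairs of ℤⁿ-periodic C² functions on ℝⁿ, and (H̄₁, H̄₂), (H̃₁, H̃₂) ∈ ℝ² are such that c₁u₁ − c₁u₂ + H₁(x, Du₁) = H̄₁ and −c₂u₁ + c₂u₂ + H₂(x, Du₂) = H̄₂ in ℝⁿ, and likewise c₁ũ₁ − c₁ũ₂ + H₁(x, Dũ₁) = H̃₁ and −c₂ũ₁ + c₂ũ₂ + H₂(x, Dũ₂) = H̃₂ in ℝⁿ. Then c₂H̄₁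 + c₁H̄₂ = c₂H̃₁ + c₁H̃₂. (This is the uniqueness of the combination c₂H̄₁ + c₁H̄₂ of effective Hamiltonians for the cell problem, stated for classical solutions.) -/
open Set Filter

def ZPer {n : ℕ} (u : EuclideanSpace ℝ (Fin n) → ℝ) : Prop :=
  ∀ (x : EuclideanSpace ℝ (Fin n)) (i : Fin n), u (x + EuclideanSpace.single i 1) = u x

lemma zper_int {n : ℕ} {u : EuclideanSpace ℝ (Fin n) → ℝ} (hu : ZPer u)
    (i : Fin n) (k : ℤ) (x : EuclideanSpace ℝ (Fin n)) :
    u (x + (k : ℝ) • EuclideanSpace.single i 1) = u x := by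
  induction k using Int.induction_on with
  | zero => simp
  | succ m ih =>
    push_cast at ih ⊢
    have h : x + ((m : ℝ) + 1) • EuclideanSpace.single i 1
        = (x + (m : ℝ) • EuclideanSpace.single i 1) + EuclideanSpace.single i 1 := by
      module
    rw [h, hu, ih]
  | pred m ih =>
    push_cast at ih ⊢
    have key : (x + (-(m : ℝ) - 1) • EuclideanSpace.single i 1) + EuclideanSpace.single i 1
        = x + (-(m : ℝ)) • EuclideanSpace.single i 1 := by
      module
    have h2 := hu (x + (-(m : ℝ) - 1) • EuclideanSpace.single i 1) i
    rw [key] at h2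
    rw [← ih, ← h2]

lemma zper_vec {n : ℕ} {u : EuclideanSpace ℝ (Fin n) → ℝ} (hu : ZPer u)
    (z : Fin n → ℤ) (x : EuclideanSpace ℝ (Fin n)) :
    u (x + ∑ i, (z i : ℝ) • EuclideanSpace.single i 1) = u x := by
  classical
  have : ∀ s : Finset (Fin n), ∀ x, u (x + ∑ i ∈ s, (z i : ℝ) • EuclideanSpace.single i 1) = u x := by
    intro s
    induction s using Finset.induction_on with
    | empty => simp
    | @insert a s hns ih =>
      intro x
      rw [Finset.sum_insert hns, ← add_assoc, show x + (z a : ℝ) • EuclideanSpace.single a 1 +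
          ∑ i ∈ s, (z i : ℝ) • EuclideanSpace.single i 1 =
          (x + (z a : ℝ) • EuclideanSpace.single a 1) +
          ∑ i ∈ s, (z i : ℝ) • EuclideanSpace.single i 1 from rfl,
        ih, zper_int hu]
  exact this Finset.univ x

lemma esum_apply {n : ℕ} (s : Finset (Fin n)) (f : Fin n → EuclideanSpace ℝ (Fin n))
    (j : Fin n) : (∑ i ∈ s, f i) j = ∑ i ∈ s, f i j := by
  classical
  induction s using Finset.induction_on with
  | empty => simp
  | @insert a s hns ih => rw [Finset.sum_insert hns, Finset.sum_insert hns, PiLp.add_apply, ih]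

lemma zper_max {n : ℕ} {u : EuclideanSpace ℝ (Fin n) → ℝ} (hu : ZPer u)
    (hc : Continuous u) : ∃ x₀, ∀ x, u x ≤ u x₀ := by
  classical
  set K : Set (EuclideanSpace ℝ (Fin n)) := Metric.closedBall 0 (n + 1) with hK
  have hKc : IsCompact K := isCompact_closedBall 0 (n + 1)
  have hKne : K.Nonempty := ⟨0, by simp [hK]; positivity⟩
  obtain ⟨x₀, _, hmax⟩ := hKc.exists_isMaxOn hKne hc.continuousOn
  refine ⟨x₀, fun x => ?_⟩
  set y : EuclideanSpace ℝ (Fin n) := x + ∑ i, ((-⌊x i⌋ : ℤ) : ℝ) • EuclideanSpace.single i 1 with hy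
  have huy : u y = u x := zper_vec hu _ x
  have hyj : ∀ j, y j = x j - ⌊x j⌋ := by
    intro j
    rw [hy, PiLp.add_apply, esum_apply]
    simp only [PiLp.smul_apply, EuclideanSpace.single_apply, smul_eq_mul, mul_ite, mul_one,
      mul_zero]
    rw [Finset.sum_ite_eq Finset.univ j]
    simp
    exact Int.self_sub_floor (x j)
  have hyK : y ∈ K := by
    rw [hK, Metric.mem_closedBall, dist_zero_right, EuclideanSpace.norm_eq]
    have h1 : ∑ i, ‖y i‖ ^ 2 ≤ (n : ℝ) := by
      calc ∑ i, ‖y i‖ ^ 2 ≤ ∑ _i : Fin n, (1 : ℝ) := by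
            apply Finset.sum_le_sum
            intro i _
            rw [hyj i, Real.norm_eq_abs]
            have h2 := Int.fract_nonneg (x i)
            have h3 := Int.fract_lt_one (x i)
            rw [Int.fract] at h2 h3
            nlinarith [abs_of_nonneg h2]
        _ = (n : ℝ) := by simp
    calc Real.sqrt (∑ i, ‖y i‖ ^ 2) ≤ Real.sqrt ((n + 1 : ℝ) ^ 2) := by
          apply Real.sqrt_le_sqrt; nlinarith
      _ = (n + 1 : ℝ) := Real.sqrt_sq (by positivity)
  calc u x = u y := huy.symm
    _ ≤ u x₀ := hmax hyK

lemma grad_eq_at_max {n : ℕ} {f g : EuclideanSpace ℝ (Fin n) → ℝ}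
    (hf : ContDiff ℝ 2 f) (hg : ContDiff ℝ 2 g) {x₀ : EuclideanSpace ℝ (Fin n)}
    (hmax : ∀ x, f x - g x ≤ f x₀ - g x₀) : gradient f x₀ = gradient g x₀ := by
  have hfd : DifferentiableAt ℝ f x₀ := (hf.differentiable (by norm_num)).differentiableAt
  have hgd : DifferentiableAt ℝ g x₀ := (hg.differentiable (by norm_num)).differentiableAt
  have hlm : IsLocalMax (fun x => f x - g x) x₀ :=
    IsMaxOn.isLocalMax (fun x _ => hmax x) univ_mem
  have h0 : fderiv ℝ (fun x => f x - g x) x₀ = 0 := hlm.fderiv_eq_zero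
  rw [fderiv_fun_sub hfd hgd] at h0
  have : fderiv ℝ f x₀ = fderiv ℝ g x₀ := by
    have := sub_eq_zero.mp h0
    exact this
  unfold gradient
  rw [this]

lemma key_ineq
    {n : ℕ}
    (H₁ H₂ : EuclideanSpace ℝ (Fin n) → EuclideanSpace ℝ (Fin n) → ℝ)
    (c₁ c₂ : ℝ) (hc₁ : 0 < c₁) (hc₂ : 0 < c₂)
    (u₁ u₂ v₁ v₂ : EuclideanSpace ℝ (Fin n) → ℝ)
    (hu₁ : ContDiff ℝ 2 u₁) (hu₂ : ContDiff ℝ 2 u₂)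
    (hv₁ : ContDiff ℝ 2 v₁) (hv₂ : ContDiff ℝ 2 v₂)
    (hu₁p : ZPer u₁) (hu₂p : ZPer u₂) (hv₁p : ZPer v₁) (hv₂p : ZPer v₂)
    (Hb₁ Hb₂ Ht₁ Ht₂ : ℝ)
    (hcell₁ : ∀ x, c₁ * u₁ x - c₁ * u₂ x + H₁ x (gradient u₁ x) = Hb₁)
    (hcell₂ : ∀ x, -c₂ * u₁ x + c₂ * u₂ x + H₂ x (gradient u₂ x) = Hb₂)
    (hcell₁' : ∀ x, c₁ * v₁ x - c₁ * v₂ x + H₁ x (gradient v₁ x) = Ht₁)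
    (hcell₂' : ∀ x, -c₂ * v₁ x + c₂ * v₂ x + H₂ x (gradient v₂ x) = Ht₂) :
    c₂ * Hb₁ + c₁ * Hb₂ ≥ c₂ * Ht₁ + c₁ * Ht₂ := by
  have hφp : ZPer (fun x => u₁ x - v₁ x) := fun x i => by simp [hu₁p x i, hv₁p x i]
  have hψp : ZPer (fun x => u₂ x - v₂ x) := fun x i => by simp [hu₂p x i, hv₂p x i]
  have hφc : Continuous (fun x => u₁ x - v₁ x) := (hu₁.continuous).sub (hv₁.continuous)
  have hψc : Continuous (fun x => u₂ x - v₂ x) := (hu₂.continuous).sub (hv₂.continuous)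
  obtain ⟨x₀, hx₀⟩ := zper_max hφp hφc
  obtain ⟨y₀, hy₀⟩ := zper_max hψp hψc
  have hg1 : gradient u₁ x₀ = gradient v₁ x₀ := grad_eq_at_max hu₁ hv₁ hx₀
  have hg2 : gradient u₂ y₀ = gradient v₂ y₀ := grad_eq_at_max hu₂ hv₂ hy₀
  have e1 := hcell₁ x₀
  have e1' := hcell₁' x₀
  rw [hg1] at e1
  have e2 := hcell₂ y₀
  have e2' := hcell₂' y₀
  rw [hg2] at e2
  -- Hb₁ - Ht₁ = c₁ * ((u₁ - v₁) x₀ - (u₂ - v₂) x₀)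
  -- Hb₂ - Ht₂ = c₂ * ((u₂ - v₂) y₀ - (u₁ - v₁) y₀)
  have hA : (u₂ y₀ - v₂ y₀) ≥ (u₂ x₀ - v₂ x₀) := hy₀ x₀
  have hB : (u₁ x₀ - v₁ x₀) ≥ (u₁ y₀ - v₁ y₀) := hx₀ y₀
  nlinarith [mul_pos hc₁ hc₂, mul_le_mul_of_nonneg_left hA (le_of_lt (mul_pos hc₁ hc₂)),
    mul_le_mul_of_nonneg_left hB (le_of_lt (mul_pos hc₁ hc₂))]

theorem stmt_12
    {n : ℕ} (hn : 2 ≤ n)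
    (H₁ H₂ : EuclideanSpace ℝ (Fin n) → EuclideanSpace ℝ (Fin n) → ℝ)
    (hH₁ : ContDiff ℝ (⊤ : ℕ∞) (fun q : EuclideanSpace ℝ (Fin n) × EuclideanSpace ℝ (Fin n) => H₁ q.1 q.2))
    (hH₂ : ContDiff ℝ (⊤ : ℕ∞) (fun q : EuclideanSpace ℝ (Fin n) × EuclideanSpace ℝ (Fin n) => H₂ q.1 q.2))
    (hH₁per : ∀ (x p : EuclideanSpace ℝ (Fin n)) (i : Fin n), H₁ (x + EuclideanSpace.single i 1) p = H₁ x p)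
    (hH₂per : ∀ (x p : EuclideanSpace ℝ (Fin n)) (i : Fin n), H₂ (x + EuclideanSpace.single i 1) p = H₂ x p)
    (c₁ c₂ : ℝ) (hc₁ : 0 < c₁) (hc₂ : 0 < c₂)
    (u₁ u₂ v₁ v₂ : EuclideanSpace ℝ (Fin n) → ℝ)
    (hu₁ : ContDiff ℝ 2 u₁) (hu₂ : ContDiff ℝ 2 u₂)
    (hv₁ : ContDiff ℝ 2 v₁) (hv₂ : ContDiff ℝ 2 v₂)
    (hu₁p : ZPer u₁) (hu₂p : ZPer u₂) (hv₁p : ZPer v₁) (hv₂p : ZPer v₂)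
    (Hb₁ Hb₂ Ht₁ Ht₂ : ℝ)
    (hcell₁ : ∀ x, c₁ * u₁ x - c₁ * u₂ x + H₁ x (gradient u₁ x) = Hb₁)
    (hcell₂ : ∀ x, -c₂ * u₁ x + c₂ * u₂ x + H₂ x (gradient u₂ x) = Hb₂)
    (hcell₁' : ∀ x, c₁ * v₁ x - c₁ * v₂ x + H₁ x (gradient v₁ x) = Ht₁)
    (hcell₂' : ∀ x, -c₂ * v₁ x + c₂ * v₂ x + H₂ x (gradient v₂ x) = Ht₂) :
    c₂ * Hb₁ + c₁ * Hb₂ = c₂ * Ht₁ + c₁ * Ht₂ := by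
  have h1 := key_ineq H₁ H₂ c₁ c₂ hc₁ hc₂ u₁ u₂ v₁ v₂ hu₁ hu₂ hv₁ hv₂
    hu₁p hu₂p hv₁p hv₂p Hb₁ Hb₂ Ht₁ Ht₂ hcell₁ hcell₂ hcell₁' hcell₂'
  have h2 := key_ineq H₁ H₂ c₁ c₂ hc₁ hc₂ v₁ v₂ u₁ u₂ hv₁ hv₂ hu₁ hu₂
    hv₁p hv₂p hu₁p hu₂p Ht₁ Ht₂ Hb₁ Hb₂ hcell₁' hcell₂' hcell₁ hcell₂
  linarith
end
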